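/- arXiv:2407.16381 — 2 statements merged into one kernel-verified Lean document; each statement's English description precedes it below -/
import Mathlib

section
/- Let Σ be a generable set of d-dimensional nonsingular cones in ℤ^d and let B be a d×2 integer matrix which is not Σ-good. Then there exists a series of B-good blow-ups Σ̃ ⇝ Σ such that μ_B(Σ̃) < μ_B(Σ). -/
open Finset

/-- The cone in `ℝ^d` generated (over the nonnegative reals) by a finite set of
integer vectors. -/
def coneOf {d : ℕ} (S : Finset (Fin d → ℤ)) : Set (Fin d → ℝ) :=
  {x | ∃ c : (Fin d → ℤ) → ℝ, (∀ v, 0 ≤ c v) ∧ x = ∑ v ∈ S, c v • (fun l => (v l : ℝ))}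

/-- `S` is the set of primitive edge generators of a `d`-dimensional nonsingular cone in
`ℤ^d`, i.e. `S` consists of `d` vectors forming a `ℤ`-basis of `ℤ^d`.  We identify such a
cone with its finite set of edge generators, an edge with its unique primitive generator. -/
def IsNsCone (d : ℕ) (S : Finset (Fin d → ℤ)) : Prop :=
  S.card = d ∧ Submodule.span ℤ (S : Set (Fin d → ℤ)) = ⊤

/-- The set of edges `E(Σ)` of a finite set of cones, each cone being given by its finite
set of edge generators. -/
def edges {d : ℕ} (F : Finset (Finset (Fin d → ℤ))) : Finset (Fin d → ℤ) :=
  F.biUnion id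

/-- A finite set of (`d`-dimensional nonsingular) cones is generable if the collection of
all the faces of all its cones is a fan: the intersection of any two such faces is again a
face of both.  A face of a cone corresponds to a subset of its set of edge generators. -/
def IsGenerable {d : ℕ} (F : Finset (Finset (Fin d → ℤ))) : Prop :=
  ∀ σ ∈ F, ∀ σ' ∈ F, ∀ s ⊆ σ, ∀ s' ⊆ σ',
    (∃ t ⊆ σ, coneOf s ∩ coneOf s' = coneOf t) ∧
    (∃ t' ⊆ σ', coneOf s ∩ coneOf s' = coneOf t')

/-- The standard blow-up of `F` along the edges `ε₁, ε₂`: every cone `σ` containing both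
`ε₁` and `ε₂` is replaced by the two cones `σ(ε₁)` and `σ(ε₂)` (where `σ(εᵢ)` is generated
by `ε₁ + ε₂` together with the edges of `σ` other than `ε_j`, `{i,j} = {1,2}`), and all
other cones are kept. -/
def blowUp {d : ℕ} (F : Finset (Finset (Fin d → ℤ))) (ε₁ ε₂ : Fin d → ℤ) :
    Finset (Finset (Fin d → ℤ)) :=
  F.filter (fun σ => ¬(ε₁ ∈ σ ∧ ε₂ ∈ σ)) ∪
    (F.filter (fun σ => ε₁ ∈ σ ∧ ε₂ ∈ σ)).biUnion
      (fun σ => {insert (ε₁ + ε₂) (σ.erase ε₂), insert (ε₁ + ε₂) (σ.erase ε₁)})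

/-- For a `d × n` integer matrix `B` and an edge with primitive generator `ε`,
`bEdge B ε i = Σ_j ε_j b_{j i}`. -/
def bEdge {d n : ℕ} (B : Matrix (Fin d) (Fin n) ℤ) (ε : Fin d → ℤ) (i : Fin n) : ℤ :=
  ∑ j, ε j * B j i

/-- `B` is `σ`-good: there is a permutation `γ` of the column indices such that
`b_{ε γ(1)} ≤ ⋯ ≤ b_{ε γ(n)}` for every edge `ε` of `σ`. -/
def GoodCone {d n : ℕ} (B : Matrix (Fin d) (Fin n) ℤ) (σ : Finset (Fin d → ℤ)) : Prop :=
  ∃ γ : Equiv.Perm (Fin n), ∀ ε ∈ σ, Monotone fun i => bEdge B ε (γ i)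

/-- `B` is `Σ`-good: it is `σ`-good for every `σ ∈ Σ`. -/
def GoodFan {d n : ℕ} (B : Matrix (Fin d) (Fin n) ℤ) (F : Finset (Finset (Fin d → ℤ))) :
    Prop :=
  ∀ σ ∈ F, GoodCone B σ

open scoped Classical

/-- For a `d × 2` matrix `B`, `deltaB B ε = b_{ε 1} - b_{ε 2}`. -/
def deltaB {d : ℕ} (B : Matrix (Fin d) (Fin 2) ℤ) (ε : Fin d → ℤ) : ℤ :=
  bEdge B ε 0 - bEdge B ε 1

/-- `Σ_bad(B)`: the cones of `Σ` for which `B` is not good. -/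
noncomputable def badCones {d : ℕ} (B : Matrix (Fin d) (Fin 2) ℤ)
    (F : Finset (Finset (Fin d → ℤ))) : Finset (Finset (Fin d → ℤ)) :=
  F.filter (fun σ => ¬ GoodCone B σ)

/-- `μ_B(Σ) = max { |b_{ε1} - b_{ε2}| : ε ∈ E(Σ_bad(B)) }`, and `0` if `Σ_bad(B) = ∅`. -/
noncomputable def muB {d : ℕ} (B : Matrix (Fin d) (Fin 2) ℤ)
    (F : Finset (Finset (Fin d → ℤ))) : ℕ :=
  (edges (badCones B F)).sup fun ε => (deltaB B ε).natAbs

/-- `E_B(Σ)`: the edges of `Σ_bad(B)` realizing the maximum `μ_B(Σ)`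
(empty if `Σ_bad(B) = ∅`). -/
noncomputable def EB {d : ℕ} (B : Matrix (Fin d) (Fin 2) ℤ)
    (F : Finset (Finset (Fin d → ℤ))) : Finset (Fin d → ℤ) :=
  (edges (badCones B F)).filter fun ε => (deltaB B ε).natAbs = muB B F

/-- `E_B(Σ, ε) = {ε' ∈ E(Σ_bad(B)) ∩ E(Σ(ε)) : (b_{ε1} - b_{ε2})(b_{ε'1} - b_{ε'2}) < 0}`. -/
noncomputable def EBe {d : ℕ} (B : Matrix (Fin d) (Fin 2) ℤ)
    (F : Finset (Finset (Fin d → ℤ))) (ε : Fin d → ℤ) : Finset (Fin d → ℤ) :=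
  ((edges (badCones B F)) ∩ edges (F.filter fun σ => ε ∈ σ)).filter
    fun ε' => deltaB B ε * deltaB B ε' < 0

/-- `ν_B(Σ) = Σ_{ε ∈ E_B(Σ)} #E_B(Σ, ε)`. -/
noncomputable def nuB {d : ℕ} (B : Matrix (Fin d) (Fin 2) ℤ)
    (F : Finset (Finset (Fin d → ℤ))) : ℕ :=
  ∑ ε ∈ EB B F, (EBe B F ε).card

/-- `F'` is a `B`-good standard blow-up of `F`: it is the standard blow-up of `F` along
some `ε₁ ∈ E_B(F)` and `ε₂ ∈ E_B(F, ε₁)` with `|b_{ε₂1} - b_{ε₂2}|` maximal among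
`E_B(F, ε₁)`. -/
noncomputable def IsBGoodBlowUp {d : ℕ} (B : Matrix (Fin d) (Fin 2) ℤ)
    (F F' : Finset (Finset (Fin d → ℤ))) : Prop :=
  ∃ ε₁ ε₂ : Fin d → ℤ,
    ε₁ ≠ ε₂ ∧ ε₁ ∈ edges F ∧ ε₂ ∈ edges F ∧ (∃ σ ∈ F, ε₁ ∈ σ ∧ ε₂ ∈ σ) ∧
    ε₁ ∈ EB B F ∧ ε₂ ∈ EBe B F ε₁ ∧
    (deltaB B ε₂).natAbs = (EBe B F ε₁).sup (fun ε => (deltaB B ε).natAbs) ∧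
    F' = blowUp F ε₁ ε₂


section BlowUpProof

variable {d : ℕ} (B : Matrix (Fin d) (Fin 2) ℤ)

lemma mem_edges_iff {F : Finset (Finset (Fin d → ℤ))} {ε : Fin d → ℤ} :
    ε ∈ edges F ↔ ∃ σ ∈ F, ε ∈ σ := by
  simp [edges]

lemma monotone_fin2 {α} [Preorder α] {f : Fin 2 → α} (h : f 0 ≤ f 1) : Monotone f := by
  intro i j hij
  have hi : i = 0 ∨ i = 1 := by omega
  have hj : j = 0 ∨ j = 1 := by omega
  rcases hi with rfl | rfl <;> rcases hj with rfl | rfl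
  · exact le_rfl
  · exact h
  · exact absurd hij (by decide)
  · exact le_rfl

lemma goodCone_iff {σ : Finset (Fin d → ℤ)} :
    GoodCone B σ ↔ (∀ ε ∈ σ, deltaB B ε ≤ 0) ∨ (∀ ε ∈ σ, 0 ≤ deltaB B ε) := by
  constructor
  · rintro ⟨γ, hγ⟩
    have h01 : (0 : Fin 2) ≤ 1 := by decide
    have hcase : γ 0 = 0 ∨ γ 0 = 1 := by omega
    rcases hcase with h0 | h0
    · left
      intro ε hε
      have h1 : γ 1 = 1 := by
        have : γ 1 = 0 ∨ γ 1 = 1 := by omega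
        rcases this with h1 | h1
        · exact absurd (γ.injective (h0.trans h1.symm)) (by decide)
        · exact h1
      have hm := hγ ε hε h01
      simp only [h0, h1] at hm
      simp only [deltaB]
      omega
    · right
      intro ε hε
      have h1 : γ 1 = 0 := by
        have : γ 1 = 0 ∨ γ 1 = 1 := by omega
        rcases this with h1 | h1
        · exact h1
        · exact absurd (γ.injective (h0.trans h1.symm)) (by decide)
      have hm := hγ ε hε h01
      simp only [h0, h1] at hm
      simp only [deltaB]
      omega
  · rintro (hle | hge)
    · refine ⟨1, fun ε hε => monotone_fin2 ?_⟩
      have := hle ε hε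
      simp only [deltaB] at this
      simp only [Equiv.Perm.one_apply]
      omega
    · refine ⟨Equiv.swap 0 1, fun ε hε => monotone_fin2 ?_⟩
      have := hge ε hε
      simp only [deltaB] at this
      simp only [Equiv.swap_apply_left, Equiv.swap_apply_right]
      omega

lemma notGood_iff {σ : Finset (Fin d → ℤ)} :
    ¬ GoodCone B σ ↔ (∃ ε ∈ σ, 0 < deltaB B ε) ∧ (∃ ε ∈ σ, deltaB B ε < 0) := by
  rw [goodCone_iff]
  push_neg
  rfl

lemma deltaB_add (ε₁ ε₂ : Fin d → ℤ) :
    deltaB B (ε₁ + ε₂) = deltaB B ε₁ + deltaB B ε₂ := by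
  simp only [deltaB, bEdge, Pi.add_apply, add_mul, Finset.sum_add_distrib]
  ring

lemma mem_blowUp_iff {F : Finset (Finset (Fin d → ℤ))} {ε₁ ε₂ : Fin d → ℤ}
    {τ : Finset (Fin d → ℤ)} :
    τ ∈ blowUp F ε₁ ε₂ ↔ (τ ∈ F ∧ ¬(ε₁ ∈ τ ∧ ε₂ ∈ τ)) ∨
      ∃ σ ∈ F, (ε₁ ∈ σ ∧ ε₂ ∈ σ) ∧
        (τ = insert (ε₁ + ε₂) (σ.erase ε₂) ∨ τ = insert (ε₁ + ε₂) (σ.erase ε₁)) := by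
  unfold blowUp
  rw [Finset.mem_union, Finset.mem_filter, Finset.mem_biUnion]
  constructor
  · rintro (⟨h1, h2⟩ | ⟨σ, hσ, hτ⟩)
    · exact Or.inl ⟨h1, h2⟩
    · rw [Finset.mem_filter] at hσ
      rw [Finset.mem_insert, Finset.mem_singleton] at hτ
      exact Or.inr ⟨σ, hσ.1, hσ.2, hτ⟩
  · rintro (⟨h1, h2⟩ | ⟨σ, hσF, hσ12, hτ⟩)
    · exact Or.inl ⟨h1, h2⟩
    · refine Or.inr ⟨σ, Finset.mem_filter.mpr ⟨hσF, hσ12⟩, ?_⟩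
      rw [Finset.mem_insert, Finset.mem_singleton]
      exact hτ

lemma muB_pos (G : Finset (Finset (Fin d → ℤ))) (h : ¬ GoodFan B G) : 0 < muB B G := by
  rw [GoodFan] at h
  push_neg at h
  obtain ⟨σ, hσ, hbadσ⟩ := h
  obtain ⟨⟨εp, hεp, hp⟩, -⟩ := (notGood_iff B).mp hbadσ
  have hmem : εp ∈ edges (badCones B G) :=
    mem_edges_iff.mpr ⟨σ, Finset.mem_filter.mpr ⟨hσ, hbadσ⟩, hεp⟩
  have h1 : (deltaB B εp).natAbs ≤ muB B G := by
    rw [muB]; exact Finset.le_sup (f := fun ε => (deltaB B ε).natAbs) hmem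
  omega

lemma muB_eq_zero_of_good (G : Finset (Finset (Fin d → ℤ))) (h : GoodFan B G) :
    muB B G = 0 := by
  have hb : badCones B G = ∅ :=
    Finset.filter_eq_empty_iff.mpr (fun {σ} hσ => not_not_intro (h σ hσ))
  simp [muB, hb, edges]

lemma step (G : Finset (Finset (Fin d → ℤ))) (h : ¬ GoodFan B G) :
    ∃ G', IsBGoodBlowUp B G G' ∧ muB B G' ≤ muB B G ∧
      (muB B G' = muB B G → nuB B G' < nuB B G) := by
  classical
  have hμpos : 0 < muB B G := muB_pos B G h
  have hEne : (edges (badCones B G)).Nonempty := by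
    rw [GoodFan] at h
    push_neg at h
    obtain ⟨σ, hσ, hbadσ⟩ := h
    obtain ⟨⟨εp, hεp, -⟩, -⟩ := (notGood_iff B).mp hbadσ
    exact ⟨εp, mem_edges_iff.mpr ⟨σ, Finset.mem_filter.mpr ⟨hσ, hbadσ⟩, hεp⟩⟩
  obtain ⟨ε₁, hε₁E, hε₁max⟩ :=
    Finset.exists_mem_eq_sup _ hEne (fun ε => (deltaB B ε).natAbs)
  have ha : (deltaB B ε₁).natAbs = muB B G := by rw [muB]; exact hε₁max.symm
  obtain ⟨σ₁, hσ₁bad, hε₁σ₁⟩ := mem_edges_iff.mp hε₁E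
  have hσ₁G : σ₁ ∈ G := (Finset.mem_filter.mp hσ₁bad).1
  obtain ⟨⟨ηp, hηpσ, hηp⟩, ηm, hηmσ, hηm⟩ :=
    (notGood_iff B).mp (Finset.mem_filter.mp hσ₁bad).2
  have hane : deltaB B ε₁ ≠ 0 := by omega
  obtain ⟨ε', hε'σ₁, hprod'⟩ : ∃ ε' ∈ σ₁, deltaB B ε₁ * deltaB B ε' < 0 := by
    rcases lt_or_gt_of_ne hane with hneg | hpos
    · exact ⟨ηp, hηpσ, mul_neg_of_neg_of_pos hneg hηp⟩
    · exact ⟨ηm, hηmσ, mul_neg_of_pos_of_neg hpos hηm⟩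
  have hε'mem : ε' ∈ EBe B G ε₁ := by
    rw [EBe, Finset.mem_filter, Finset.mem_inter]
    exact ⟨⟨mem_edges_iff.mpr ⟨σ₁, hσ₁bad, hε'σ₁⟩,
      mem_edges_iff.mpr ⟨σ₁, Finset.mem_filter.mpr ⟨hσ₁G, hε₁σ₁⟩, hε'σ₁⟩⟩, hprod'⟩
  obtain ⟨ε₂, hε₂S, hε₂max⟩ :=
    Finset.exists_mem_eq_sup _ ⟨ε', hε'mem⟩ (fun ε => (deltaB B ε).natAbs)
  have hab : deltaB B ε₁ * deltaB B ε₂ < 0 := (Finset.mem_filter.mp hε₂S).2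
  have hbμ : (deltaB B ε₂).natAbs ≤ muB B G := by
    have hm : ε₂ ∈ edges (badCones B G) :=
      (Finset.mem_inter.mp (Finset.mem_filter.mp hε₂S).1).1
    rw [muB]; exact Finset.le_sup (f := fun ε => (deltaB B ε).natAbs) hm
  obtain ⟨τ₂, hτ₂, hε₂τ₂⟩ :=
    mem_edges_iff.mp (Finset.mem_inter.mp (Finset.mem_filter.mp hε₂S).1).2
  have hτ₂G : τ₂ ∈ G := (Finset.mem_filter.mp hτ₂).1
  have hε₁τ₂ : ε₁ ∈ τ₂ := (Finset.mem_filter.mp hτ₂).2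
  have hde : deltaB B (ε₁ + ε₂) = deltaB B ε₁ + deltaB B ε₂ := deltaB_add B ε₁ ε₂
  have habs : (deltaB B ε₁ + deltaB B ε₂).natAbs < muB B G := by
    rcases mul_neg_iff.mp hab with ⟨h1, h2⟩ | ⟨h1, h2⟩ <;> omega
  have hb0' : deltaB B ε₂ ≠ 0 := by
    rintro h0
    rw [h0, mul_zero] at hab
    exact absurd hab (lt_irrefl 0)
  have he1 : ε₁ + ε₂ ≠ ε₁ := by
    intro hh
    have h2 := deltaB_add B ε₁ ε₂
    rw [hh] at h2
    omega
  have he2 : ε₁ + ε₂ ≠ ε₂ := by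
    intro hh
    have h2 := deltaB_add B ε₁ ε₂
    rw [hh] at h2
    omega
  have hε₁ne₂ : ε₁ ≠ ε₂ := by
    intro hh
    rw [← hh] at hab
    nlinarith
  have hbadboth : ∀ σ ∈ G, ε₁ ∈ σ → ε₂ ∈ σ → σ ∈ badCones B G := by
    intro σ hσ h1 h2
    rw [badCones, Finset.mem_filter]
    refine ⟨hσ, ?_⟩
    rw [notGood_iff]
    rcases mul_neg_iff.mp hab with ⟨hp, hn⟩ | ⟨hn, hp⟩
    · exact ⟨⟨ε₁, h1, hp⟩, ⟨ε₂, h2, hn⟩⟩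
    · exact ⟨⟨ε₂, h2, hp⟩, ⟨ε₁, h1, hn⟩⟩
  have K1 : ∀ ε ∈ edges (badCones B (blowUp G ε₁ ε₂)),
      ε = ε₁ + ε₂ ∨ ε ∈ edges (badCones B G) := by
    intro ε hε
    obtain ⟨τ, hτ, hετ⟩ := mem_edges_iff.mp hε
    have hτ' := Finset.mem_filter.mp hτ
    rcases mem_blowUp_iff.mp hτ'.1 with ⟨hτG, -⟩ | ⟨σ, hσG, ⟨h1, h2⟩, hcases⟩
    · exact Or.inr (mem_edges_iff.mpr ⟨τ, Finset.mem_filter.mpr ⟨hτG, hτ'.2⟩, hετ⟩)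
    · have hσbad := hbadboth σ hσG h1 h2
      rcases hcases with rfl | rfl <;>
      · rcases Finset.mem_insert.mp hετ with rfl | hεσ
        · exact Or.inl rfl
        · exact Or.inr (mem_edges_iff.mpr ⟨σ, hσbad, Finset.mem_of_mem_erase hεσ⟩)
  have K2 : muB B (blowUp G ε₁ ε₂) ≤ muB B G := by
    conv_lhs => rw [muB]
    apply Finset.sup_le
    intro ε hε
    rcases K1 ε hε with rfl | hmem
    · omega
    · rw [muB]; exact Finset.le_sup (f := fun ε => (deltaB B ε).natAbs) hmem
  have K3 : ∀ τ ∈ blowUp G ε₁ ε₂, ¬(ε₁ ∈ τ ∧ ε₂ ∈ τ) := by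
    intro τ hτ
    rcases mem_blowUp_iff.mp hτ with ⟨-, hn⟩ | ⟨σ, -, -, rfl | rfl⟩
    · exact hn
    · rintro ⟨-, h2⟩
      rcases Finset.mem_insert.mp h2 with hh | hh
      · exact he2 hh.symm
      · exact (Finset.mem_erase.mp hh).1 rfl
    · rintro ⟨h1, -⟩
      rcases Finset.mem_insert.mp h1 with hh | hh
      · exact he1 hh.symm
      · exact (Finset.mem_erase.mp hh).1 rfl
  have K4 : ∀ τ ∈ blowUp G ε₁ ε₂, ∀ x ∈ τ, ∀ y ∈ τ, x ≠ ε₁ + ε₂ → y ≠ ε₁ + ε₂ →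
      ∃ σ ∈ G, x ∈ σ ∧ y ∈ σ := by
    intro τ hτ x hx y hy hxe hye
    rcases mem_blowUp_iff.mp hτ with ⟨hτG, -⟩ | ⟨σ, hσG, -, rfl | rfl⟩
    · exact ⟨τ, hτG, hx, hy⟩
    all_goals {
      refine ⟨σ, hσG, ?_, ?_⟩
      · rcases Finset.mem_insert.mp hx with rfl | hh
        · exact absurd rfl hxe
        · exact Finset.mem_of_mem_erase hh
      · rcases Finset.mem_insert.mp hy with rfl | hh
        · exact absurd rfl hye
        · exact Finset.mem_of_mem_erase hh }
  have K4e : ∀ τ ∈ blowUp G ε₁ ε₂, ∀ x ∈ τ, x ≠ ε₁ + ε₂ → (ε₁ + ε₂) ∈ τ →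
      (∃ σ ∈ G, x ∈ σ ∧ ε₁ ∈ σ ∧ ε₂ ∈ σ) ∨ (∃ σ ∈ G, x ∈ σ ∧ (ε₁ + ε₂) ∈ σ) := by
    intro τ hτ x hx hxe heτ
    rcases mem_blowUp_iff.mp hτ with ⟨hτG, -⟩ | ⟨σ, hσG, ⟨h1, h2⟩, rfl | rfl⟩
    · exact Or.inr ⟨τ, hτG, hx, heτ⟩
    all_goals {
      refine Or.inl ⟨σ, hσG, ?_, h1, h2⟩
      rcases Finset.mem_insert.mp hx with rfl | hh
      · exact absurd rfl hxe
      · exact Finset.mem_of_mem_erase hh }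
  have hε₁EB : ε₁ ∈ EB B G := by
    rw [EB, Finset.mem_filter]
    exact ⟨hε₁E, ha⟩
  refine ⟨blowUp G ε₁ ε₂,
    ⟨ε₁, ε₂, hε₁ne₂, mem_edges_iff.mpr ⟨σ₁, hσ₁G, hε₁σ₁⟩,
      mem_edges_iff.mpr ⟨τ₂, hτ₂G, hε₂τ₂⟩, ⟨τ₂, hτ₂G, hε₁τ₂, hε₂τ₂⟩,
      hε₁EB, hε₂S, hε₂max.symm, rfl⟩, K2, ?_⟩
  intro hmm
  have hEBsub : EB B (blowUp G ε₁ ε₂) ⊆ EB B G := by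
    intro ε hε
    rw [EB, Finset.mem_filter] at hε ⊢
    obtain ⟨hεE, hεeq⟩ := hε
    have hεμ : (deltaB B ε).natAbs = muB B G := by rw [hεeq, hmm]
    rcases K1 ε hεE with rfl | hmem
    · omega
    · exact ⟨hmem, hεμ⟩
  have K6 : ∀ ε ∈ EB B (blowUp G ε₁ ε₂),
      EBe B (blowUp G ε₁ ε₂) ε ⊆ EBe B G ε := by
    intro ε hεEB ε' hε'
    rw [EBe, Finset.mem_filter, Finset.mem_inter] at hε'
    obtain ⟨⟨hε'bad, hε'co⟩, hprod⟩ := hε'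
    rw [EB, Finset.mem_filter] at hεEB
    obtain ⟨hεbadE, hεμ'⟩ := hεEB
    have hεμ : (deltaB B ε).natAbs = muB B G := by rw [hεμ', hmm]
    have hεne : ε ≠ ε₁ + ε₂ := by
      rintro rfl
      omega
    have hεbadG : ε ∈ edges (badCones B G) := by
      rcases K1 ε hεbadE with rfl | hh
      · exact absurd rfl hεne
      · exact hh
    obtain ⟨τ, hτ, hε'τ⟩ := mem_edges_iff.mp hε'co
    have hτbu : τ ∈ blowUp G ε₁ ε₂ := (Finset.mem_filter.mp hτ).1
    have hετ : ε ∈ τ := (Finset.mem_filter.mp hτ).2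
    by_cases hcase : ε' = ε₁ + ε₂
    · subst hcase
      rcases K4e τ hτbu ε hετ hεne hε'τ with ⟨σ, hσG, hεσ, h1σ, h2σ⟩ | ⟨σ, hσG, hεσ, heσ⟩
      · exfalso
        rw [hde] at hprod
        have hsumne : deltaB B ε₁ + deltaB B ε₂ ≠ 0 := by
          rintro h0
          rw [h0, mul_zero] at hprod
          exact lt_irrefl 0 hprod
        have hεa : deltaB B ε₁ * deltaB B ε < 0 := by
          rcases mul_neg_iff.mp hab with ⟨hpa, hnb⟩ | ⟨hna, hpb⟩
          · have hsum : 0 ≤ deltaB B ε₁ + deltaB B ε₂ := by omega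
            have hδεneg : deltaB B ε < 0 := by
              by_contra hcon
              push_neg at hcon
              nlinarith [mul_nonneg hcon hsum]
            exact mul_neg_of_pos_of_neg hpa hδεneg
          · have hsum : deltaB B ε₁ + deltaB B ε₂ ≤ 0 := by omega
            have hδεpos : 0 < deltaB B ε := by
              by_contra hcon
              push_neg at hcon
              nlinarith [mul_nonneg (neg_nonneg.mpr hcon) (neg_nonneg.mpr hsum)]
            exact mul_neg_of_neg_of_pos hna hδεpos
        have hεS₁ : ε ∈ EBe B G ε₁ := by
          rw [EBe, Finset.mem_filter, Finset.mem_inter]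
          exact ⟨⟨hεbadG, mem_edges_iff.mpr ⟨σ, Finset.mem_filter.mpr ⟨hσG, h1σ⟩, hεσ⟩⟩, hεa⟩
        have hle : (deltaB B ε).natAbs ≤ (deltaB B ε₂).natAbs := by
          rw [← hε₂max]
          exact Finset.le_sup (f := fun ε => (deltaB B ε).natAbs) hεS₁
        rcases mul_neg_iff.mp hab with ⟨h1, h2⟩ | ⟨h1, h2⟩ <;> omega
      · have hσbad : σ ∈ badCones B G := by
          rw [badCones, Finset.mem_filter]
          refine ⟨hσG, ?_⟩
          rw [notGood_iff]
          rcases mul_neg_iff.mp hprod with ⟨hp, hn⟩ | ⟨hn, hp⟩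
          · exact ⟨⟨ε, hεσ, hp⟩, ⟨ε₁ + ε₂, heσ, hn⟩⟩
          · exact ⟨⟨ε₁ + ε₂, heσ, hp⟩, ⟨ε, hεσ, hn⟩⟩
        rw [EBe, Finset.mem_filter, Finset.mem_inter]
        exact ⟨⟨mem_edges_iff.mpr ⟨σ, hσbad, heσ⟩,
          mem_edges_iff.mpr ⟨σ, Finset.mem_filter.mpr ⟨hσG, hεσ⟩, heσ⟩⟩, hprod⟩
    · have hε'badG : ε' ∈ edges (badCones B G) := by
        rcases K1 ε' hε'bad with rfl | hh
        · exact absurd rfl hcase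
        · exact hh
      obtain ⟨σ, hσG, hεσ, hε'σ⟩ := K4 τ hτbu ε hετ ε' hε'τ hεne hcase
      rw [EBe, Finset.mem_filter, Finset.mem_inter]
      exact ⟨⟨hε'badG, mem_edges_iff.mpr ⟨σ, Finset.mem_filter.mpr ⟨hσG, hεσ⟩, hε'σ⟩⟩, hprod⟩
  have K7 : ε₂ ∉ EBe B (blowUp G ε₁ ε₂) ε₁ := by
    intro hmem
    rw [EBe, Finset.mem_filter, Finset.mem_inter] at hmem
    obtain ⟨σ, hσ, h2σ⟩ := mem_edges_iff.mp hmem.1.2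
    exact K3 σ (Finset.mem_filter.mp hσ).1 ⟨(Finset.mem_filter.mp hσ).2, h2σ⟩
  have hfpos : 0 < (EBe B G ε₁).card := Finset.card_pos.mpr ⟨ε₂, hε₂S⟩
  rw [nuB, nuB]
  by_cases hc : ε₁ ∈ EB B (blowUp G ε₁ ε₂)
  · have hlt : (EBe B (blowUp G ε₁ ε₂) ε₁).card < (EBe B G ε₁).card :=
      Finset.card_lt_card ((Finset.ssubset_iff_of_subset (K6 ε₁ hc)).mpr ⟨ε₂, hε₂S, K7⟩)
    have hsum1 : ∑ ε ∈ (EB B (blowUp G ε₁ ε₂)).erase ε₁, (EBe B (blowUp G ε₁ ε₂) ε).card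
        ≤ ∑ ε ∈ (EB B G).erase ε₁, (EBe B G ε).card := by
      calc ∑ ε ∈ (EB B (blowUp G ε₁ ε₂)).erase ε₁, (EBe B (blowUp G ε₁ ε₂) ε).card
          ≤ ∑ ε ∈ (EB B (blowUp G ε₁ ε₂)).erase ε₁, (EBe B G ε).card :=
            Finset.sum_le_sum (fun ε hε =>
              Finset.card_le_card (K6 ε (Finset.mem_of_mem_erase hε)))
        _ ≤ _ := Finset.sum_le_sum_of_subset (Finset.erase_subset_erase _ hEBsub)
    have e1 := Finset.sum_erase_add (EB B (blowUp G ε₁ ε₂))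
      (fun ε => (EBe B (blowUp G ε₁ ε₂) ε).card) hc
    have e2 := Finset.sum_erase_add (EB B G) (fun ε => (EBe B G ε).card) hε₁EB
    omega
  · have hsub : EB B (blowUp G ε₁ ε₂) ⊆ (EB B G).erase ε₁ := fun ε hε =>
      Finset.mem_erase.mpr ⟨by rintro rfl; exact hc hε, hEBsub hε⟩
    have hsum1 : ∑ ε ∈ EB B (blowUp G ε₁ ε₂), (EBe B (blowUp G ε₁ ε₂) ε).card
        ≤ ∑ ε ∈ (EB B G).erase ε₁, (EBe B G ε).card := by
      calc ∑ ε ∈ EB B (blowUp G ε₁ ε₂), (EBe B (blowUp G ε₁ ε₂) ε).card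
          ≤ ∑ ε ∈ EB B (blowUp G ε₁ ε₂), (EBe B G ε).card :=
            Finset.sum_le_sum (fun ε hε => Finset.card_le_card (K6 ε hε))
        _ ≤ _ := Finset.sum_le_sum_of_subset hsub
    have e2 := Finset.sum_erase_add (EB B G) (fun ε => (EBe B G ε).card) hε₁EB
    omega

end BlowUpProof

/-- if `B` is not `Σ`-good, there is a series of `B`-good blow-ups
`Σ̃ ⇝ Σ` with `μ_B(Σ̃) < μ_B(Σ)`. -/
theorem stmt4 (d : ℕ) (F : Finset (Finset (Fin d → ℤ)))
    (hns : ∀ σ ∈ F, IsNsCone d σ) (hgen : IsGenerable F)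
    (B : Matrix (Fin d) (Fin 2) ℤ) (hbad : ¬ GoodFan B F) :
    ∃ F' : Finset (Finset (Fin d → ℤ)),
      Relation.ReflTransGen (IsBGoodBlowUp B) F F' ∧ muB B F' < muB B F := by
  clear hns hgen
  suffices H : ∀ n (G : Finset (Finset (Fin d → ℤ))), ¬ GoodFan B G → nuB B G ≤ n →
      ∃ G', Relation.ReflTransGen (IsBGoodBlowUp B) G G' ∧ muB B G' < muB B G by
    exact H (nuB B F) F hbad le_rfl
  intro n
  induction n with
  | zero =>
    intro G hbadG hn
    obtain ⟨G', hbu, hle, himp⟩ := step B G hbadG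
    refine ⟨G', Relation.ReflTransGen.single hbu, ?_⟩
    rcases lt_or_eq_of_le hle with hlt | heq
    · exact hlt
    · have := himp heq
      omega
  | succ n ih =>
    intro G hbadG hn
    obtain ⟨G₁, hbu, hle, himp⟩ := step B G hbadG
    rcases lt_or_eq_of_le hle with hlt | heq
    · exact ⟨G₁, Relation.ReflTransGen.single hbu, hlt⟩
    · have hν := himp heq
      have hbad₁ : ¬ GoodFan B G₁ := by
        intro hg
        have h1 := muB_eq_zero_of_good B G₁ hg
        have h2 := muB_pos B G hbadG
        omega
      obtain ⟨G', hrt, hμ⟩ := ih G₁ hbad₁ (by omega)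
      exact ⟨G', Relation.ReflTransGen.head hbu hrt, by omega⟩
end

section
/- Let Σ be a generable set of d-dimensional nonsingular cones in ℤ^d and let B be a d×n integer matrix. If B is not Σ-good, then there exists a series of standard blow-ups Σ̃ ⇝ Σ such that B is Σ̃-good. -/
open Finset

/-- `F'` is a standard blow-up of `F` along some pair of distinct edges `ε₁, ε₂ ∈ E(F)`
with `Σ(ε₁) ∩ Σ(ε₂) ≠ ∅`. -/
def IsStdBlowUp {d : ℕ} (F F' : Finset (Finset (Fin d → ℤ))) : Prop :=
  ∃ ε₁ ε₂ : Fin d → ℤ,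
    ε₁ ≠ ε₂ ∧ ε₁ ∈ edges F ∧ ε₂ ∈ edges F ∧ (∃ σ ∈ F, ε₁ ∈ σ ∧ ε₂ ∈ σ) ∧
    F' = blowUp F ε₁ ε₂

section Aux

variable {d n : ℕ}

/-- Difference of columns `i`, `j` of `B` along the edge `ε`. -/
def dlt (B : Matrix (Fin d) (Fin n) ℤ) (i j : Fin n) (ε : Fin d → ℤ) : ℤ :=
  bEdge B ε i - bEdge B ε j

lemma bEdge_add (B : Matrix (Fin d) (Fin n) ℤ) (ε ε' : Fin d → ℤ) (i : Fin n) :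
    bEdge B (ε + ε') i = bEdge B ε i + bEdge B ε' i := by
  simp [bEdge, add_mul, Finset.sum_add_distrib]

lemma dlt_add (B : Matrix (Fin d) (Fin n) ℤ) (i j : Fin n) (ε ε' : Fin d → ℤ) :
    dlt B i j (ε + ε') = dlt B i j ε + dlt B i j ε' := by
  simp [dlt, bEdge_add]; ring

open Classical in
/-- Pairs of edges cohabiting in a cone of `F` on which columns `i`, `j` conflict. -/
noncomputable def badPairs (B : Matrix (Fin d) (Fin n) ℤ) (i j : Fin n)
    (F : Finset (Finset (Fin d → ℤ))) : Finset ((Fin d → ℤ) × (Fin d → ℤ)) :=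
  ((edges F) ×ˢ (edges F)).filter
    (fun p => (∃ σ ∈ F, p.1 ∈ σ ∧ p.2 ∈ σ) ∧ 0 < dlt B i j p.1 ∧ dlt B i j p.2 < 0)

/-- The gap of a conflicting pair. -/
def gapOf (B : Matrix (Fin d) (Fin n) ℤ) (i j : Fin n)
    (p : (Fin d → ℤ) × (Fin d → ℤ)) : ℕ :=
  (dlt B i j p.1 - dlt B i j p.2).toNat

lemma mem_badPairs {B : Matrix (Fin d) (Fin n) ℤ} {i j : Fin n}
    {F : Finset (Finset (Fin d → ℤ))} {p : (Fin d → ℤ) × (Fin d → ℤ)} :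
    p ∈ badPairs B i j F ↔
      (∃ σ ∈ F, p.1 ∈ σ ∧ p.2 ∈ σ) ∧ 0 < dlt B i j p.1 ∧ dlt B i j p.2 < 0 := by
  classical
  constructor
  · intro h
    simpa [badPairs] using (Finset.mem_filter.1 h).2
  · intro h
    apply Finset.mem_filter.2
    refine ⟨?_, h⟩
    obtain ⟨σ, hσ, h1, h2⟩ := h.1
    exact Finset.mem_product.2 ⟨Finset.mem_biUnion.2 ⟨σ, hσ, h1⟩,
      Finset.mem_biUnion.2 ⟨σ, hσ, h2⟩⟩

/-- `F` is consistent for the columns `i`, `j`. -/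
def Cst (B : Matrix (Fin d) (Fin n) ℤ) (i j : Fin n)
    (F : Finset (Finset (Fin d → ℤ))) : Prop :=
  ∀ σ ∈ F, ∀ ε ∈ σ, ∀ ε' ∈ σ, 0 < dlt B i j ε → dlt B i j ε' < 0 → False

lemma cst_of_badPairs_empty {B : Matrix (Fin d) (Fin n) ℤ} {i j : Fin n}
    {F : Finset (Finset (Fin d → ℤ))} (h : badPairs B i j F = ∅) : Cst B i j F := by
  intro σ hσ ε hε ε' hε' h1 h2
  have : (ε, ε') ∈ badPairs B i j F := mem_badPairs.2 ⟨⟨σ, hσ, hε, hε'⟩, h1, h2⟩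
  simp [h] at this

lemma mem_blowUp {F : Finset (Finset (Fin d → ℤ))} {ε₁ ε₂ : Fin d → ℤ}
    {τ : Finset (Fin d → ℤ)} (h : τ ∈ blowUp F ε₁ ε₂) :
    (τ ∈ F ∧ ¬(ε₁ ∈ τ ∧ ε₂ ∈ τ)) ∨
    ∃ σ ∈ F, (ε₁ ∈ σ ∧ ε₂ ∈ σ) ∧
      (τ = insert (ε₁ + ε₂) (σ.erase ε₂) ∨ τ = insert (ε₁ + ε₂) (σ.erase ε₁)) := by
  classical
  rcases Finset.mem_union.1 h with h | h
  · exact Or.inl ⟨(Finset.mem_filter.1 h).1, (Finset.mem_filter.1 h).2⟩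
  · right
    rcases Finset.mem_biUnion.1 h with ⟨σ, hσ, hτ⟩
    rcases Finset.mem_filter.1 hσ with ⟨hσF, hσ12⟩
    refine ⟨σ, hσF, hσ12, ?_⟩
    rcases Finset.mem_insert.1 hτ with h | h
    · exact Or.inl h
    · exact Or.inr (Finset.mem_singleton.1 h)

lemma cst_blowUp {B : Matrix (Fin d) (Fin n) ℤ} {i j : Fin n}
    {F : Finset (Finset (Fin d → ℤ))} {ε₁ ε₂ : Fin d → ℤ}
    (h : Cst B i j F) : Cst B i j (blowUp F ε₁ ε₂) := by
  intro τ hτ ε hε ε' hε' h1 h2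
  rcases mem_blowUp hτ with ⟨hF, _⟩ | ⟨σ, hσ, ⟨he1, he2⟩, hcase⟩
  · exact h τ hF ε hε ε' hε' h1 h2
  · have hsub : ∀ x ∈ τ, x ∈ σ ∨ x = ε₁ + ε₂ := by
      intro x hx
      rcases hcase with rfl | rfl <;>
      · rcases Finset.mem_insert.1 hx with h' | h'
        · exact Or.inr h'
        · exact Or.inl (Finset.mem_of_mem_erase h')
    have hpos : ∃ a ∈ σ, 0 < dlt B i j a := by
      rcases hsub ε hε with hh | hh
      · exact ⟨ε, hh, h1⟩
      · rw [hh, dlt_add] at h1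
        rcases lt_or_ge 0 (dlt B i j ε₁) with hp | hp
        · exact ⟨ε₁, he1, hp⟩
        · exact ⟨ε₂, he2, by linarith⟩
    have hneg : ∃ b ∈ σ, dlt B i j b < 0 := by
      rcases hsub ε' hε' with hh | hh
      · exact ⟨ε', hh, h2⟩
      · rw [hh, dlt_add] at h2
        rcases lt_or_ge (dlt B i j ε₁) 0 with hp | hp
        · exact ⟨ε₁, he1, hp⟩
        · exact ⟨ε₂, he2, by linarith⟩
    obtain ⟨a, ha, hpa⟩ := hpos
    obtain ⟨b, hb, hnb⟩ := hneg
    exact h σ hσ a ha b hb hpa hnb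

lemma cst_rtg {B : Matrix (Fin d) (Fin n) ℤ} {i j : Fin n}
    {F F' : Finset (Finset (Fin d → ℤ))}
    (h : Relation.ReflTransGen IsStdBlowUp F F') (hc : Cst B i j F) : Cst B i j F' := by
  induction h with
  | refl => exact hc
  | tail _ hstep ih =>
    obtain ⟨ε₁, ε₂, _, _, _, _, rfl⟩ := hstep
    exact cst_blowUp ih

lemma exists_blowUp_step (B : Matrix (Fin d) (Fin n) ℤ) (i j : Fin n)
    (F : Finset (Finset (Fin d → ℤ))) (hne : (badPairs B i j F).Nonempty) :
    ∃ F₁, IsStdBlowUp F F₁ ∧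
      (badPairs B i j F₁).sup (gapOf B i j) ≤ (badPairs B i j F).sup (gapOf B i j) ∧
      ((badPairs B i j F₁).filter
          (fun p => gapOf B i j p = (badPairs B i j F).sup (gapOf B i j))).card <
      ((badPairs B i j F).filter
          (fun p => gapOf B i j p = (badPairs B i j F).sup (gapOf B i j))).card := by
  classical
  obtain ⟨p₀, hp₀, hsup⟩ := Finset.exists_mem_eq_sup _ hne (gapOf B i j)
  obtain ⟨⟨σ₀, hσ₀, h01, h02⟩, hd1, hd2⟩ := mem_badPairs.1 hp₀
  have hne12 : p₀.1 ≠ p₀.2 := by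
    intro h
    rw [h] at hd1; linarith
  have he1 : p₀.1 ∈ edges F := Finset.mem_biUnion.2 ⟨σ₀, hσ₀, h01⟩
  have he2 : p₀.2 ∈ edges F := Finset.mem_biUnion.2 ⟨σ₀, hσ₀, h02⟩
  have hstd : IsStdBlowUp F (blowUp F p₀.1 p₀.2) :=
    ⟨p₀.1, p₀.2, hne12, he1, he2, ⟨σ₀, hσ₀, h01, h02⟩, rfl⟩
  have key : ∀ p ∈ badPairs B i j (blowUp F p₀.1 p₀.2),
      (p ∈ badPairs B i j F ∧ p ≠ p₀) ∨ gapOf B i j p < gapOf B i j p₀ := by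
    intro p hp
    obtain ⟨⟨τ, hτ, hpa, hpb⟩, ha, hb⟩ := mem_badPairs.1 hp
    rcases mem_blowUp hτ with ⟨hF, hnot⟩ | ⟨σ, hσ, ⟨he1', he2'⟩, hcase⟩
    · left
      refine ⟨mem_badPairs.2 ⟨⟨τ, hF, hpa, hpb⟩, ha, hb⟩, ?_⟩
      rintro rfl
      exact hnot ⟨hpa, hpb⟩
    · have hs1 : p₀.1 + p₀.2 ≠ p₀.1 := by
        intro h
        have h2' : dlt B i j (p₀.1 + p₀.2) = dlt B i j p₀.1 := by rw [h]
        rw [dlt_add] at h2'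
        linarith
      have hs2 : p₀.1 + p₀.2 ≠ p₀.2 := by
        intro h
        have h2' : dlt B i j (p₀.1 + p₀.2) = dlt B i j p₀.2 := by rw [h]
        rw [dlt_add] at h2'
        linarith
      have hnotboth : ¬(p₀.1 ∈ τ ∧ p₀.2 ∈ τ) := by
        rcases hcase with rfl | rfl
        · rintro ⟨-, h2'⟩
          rcases Finset.mem_insert.1 h2' with h' | h'
          · exact hs2 h'.symm
          · exact (Finset.notMem_erase _ _) h'
        · rintro ⟨h1', -⟩
          rcases Finset.mem_insert.1 h1' with h' | h'
          · exact hs1 h'.symm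
          · exact (Finset.notMem_erase _ _) h'
      have hτsub : ∀ x ∈ τ, x ∈ σ ∨ x = p₀.1 + p₀.2 := by
        intro x hx
        rcases hcase with rfl | rfl <;>
        · rcases Finset.mem_insert.1 hx with h' | h'
          · exact Or.inr h'
          · exact Or.inl (Finset.mem_of_mem_erase h')
      rcases hτsub p.1 hpa with h1 | h1 <;> rcases hτsub p.2 hpb with h2 | h2
      · left
        refine ⟨mem_badPairs.2 ⟨⟨σ, hσ, h1, h2⟩, ha, hb⟩, ?_⟩
        rintro rfl
        exact hnotboth ⟨hpa, hpb⟩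
      · -- p.2 = sum, p.1 ∈ σ
        right
        have hmem : (p.1, p₀.2) ∈ badPairs B i j F :=
          mem_badPairs.2 ⟨⟨σ, hσ, h1, he2'⟩, ha, hd2⟩
        have hle : gapOf B i j (p.1, p₀.2) ≤ gapOf B i j p₀ := by
          rw [← hsup]; exact Finset.le_sup hmem
        have e2 : dlt B i j p.2 = dlt B i j p₀.1 + dlt B i j p₀.2 := by
          rw [h2, dlt_add]
        have hlt : gapOf B i j p < gapOf B i j (p.1, p₀.2) := by
          simp only [gapOf, e2]
          exact (Int.toNat_lt_toNat (by linarith)).2 (by linarith)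
        exact lt_of_lt_of_le hlt hle
      · -- p.1 = sum, p.2 ∈ σ
        right
        have hmem : (p₀.1, p.2) ∈ badPairs B i j F :=
          mem_badPairs.2 ⟨⟨σ, hσ, he1', h2⟩, hd1, hb⟩
        have hle : gapOf B i j (p₀.1, p.2) ≤ gapOf B i j p₀ := by
          rw [← hsup]; exact Finset.le_sup hmem
        have e1 : dlt B i j p.1 = dlt B i j p₀.1 + dlt B i j p₀.2 := by
          rw [h1, dlt_add]
        have hlt : gapOf B i j p < gapOf B i j (p₀.1, p.2) := by
          simp only [gapOf, e1]
          exact (Int.toNat_lt_toNat (by linarith)).2 (by linarith)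
        exact lt_of_lt_of_le hlt hle
      · -- both equal the sum
        exfalso
        rw [h1] at ha
        rw [h2] at hb
        linarith
  refine ⟨blowUp F p₀.1 p₀.2, hstd, ?_, ?_⟩
  · apply Finset.sup_le
    intro p hp
    rcases key p hp with ⟨hm, _⟩ | hlt
    · exact Finset.le_sup hm
    · rw [hsup]; exact le_of_lt hlt
  · have hsubs : (badPairs B i j (blowUp F p₀.1 p₀.2)).filter
        (fun p => gapOf B i j p = (badPairs B i j F).sup (gapOf B i j)) ⊆
        ((badPairs B i j F).filter
          (fun p => gapOf B i j p = (badPairs B i j F).sup (gapOf B i j))).erase p₀ := by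
      intro p hp
      rw [Finset.mem_filter] at hp
      rcases key p hp.1 with ⟨hm, hne'⟩ | hlt
      · exact Finset.mem_erase.2 ⟨hne', Finset.mem_filter.2 ⟨hm, hp.2⟩⟩
      · exfalso
        rw [hsup] at hp
        omega
    have hp₀mem : p₀ ∈ (badPairs B i j F).filter
        (fun p => gapOf B i j p = (badPairs B i j F).sup (gapOf B i j)) :=
      Finset.mem_filter.2 ⟨hp₀, hsup.symm⟩
    calc ((badPairs B i j (blowUp F p₀.1 p₀.2)).filter _).card
        ≤ (((badPairs B i j F).filter _).erase p₀).card := Finset.card_le_card hsubs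
      _ < ((badPairs B i j F).filter _).card :=
          Finset.card_erase_lt_of_mem hp₀mem
  
lemma exists_cst (B : Matrix (Fin d) (Fin n) ℤ) (i j : Fin n)
    (F : Finset (Finset (Fin d → ℤ))) :
    ∃ F', Relation.ReflTransGen IsStdBlowUp F F' ∧ Cst B i j F' := by
  classical
  suffices H : ∀ g c (F : Finset (Finset (Fin d → ℤ))),
      (badPairs B i j F).sup (gapOf B i j) = g →
      ((badPairs B i j F).filter (fun p => gapOf B i j p = g)).card = c →
      ∃ F', Relation.ReflTransGen IsStdBlowUp F F' ∧ Cst B i j F' by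
    exact H _ _ F rfl rfl
  intro g
  induction g using Nat.strong_induction_on with
  | _ g IHg =>
  intro c
  induction c using Nat.strong_induction_on with
  | _ c IHc =>
  intro F hg hc
  rcases Finset.eq_empty_or_nonempty (badPairs B i j F) with he | hne
  · exact ⟨F, Relation.ReflTransGen.refl, cst_of_badPairs_empty he⟩
  · obtain ⟨F₁, hstd, hle, hlt⟩ := exists_blowUp_step B i j F hne
    rcases lt_or_eq_of_le hle with h | h
    · obtain ⟨F', h1, h2⟩ := IHg _ (hg ▸ h) _ F₁ rfl rfl
      exact ⟨F', Relation.ReflTransGen.head hstd h1, h2⟩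
    · have hnu : ((badPairs B i j F₁).filter (fun p => gapOf B i j p = g)).card < c := by
        rw [← hc, ← hg]
        exact hlt
      obtain ⟨F', h1, h2⟩ := IHc _ hnu F₁ (by rw [h, hg]) rfl
      exact ⟨F', Relation.ReflTransGen.head hstd h1, h2⟩

lemma exists_cst_all (B : Matrix (Fin d) (Fin n) ℤ)
    (F : Finset (Finset (Fin d → ℤ))) :
    ∃ F', Relation.ReflTransGen IsStdBlowUp F F' ∧ ∀ i j : Fin n, Cst B i j F' := by
  classical
  suffices H : ∀ S : Finset (Fin n × Fin n),
      ∃ F', Relation.ReflTransGen IsStdBlowUp F F' ∧ ∀ p ∈ S, Cst B p.1 p.2 F' by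
    obtain ⟨F', h1, h2⟩ := H Finset.univ
    exact ⟨F', h1, fun i j => h2 (i, j) (Finset.mem_univ _)⟩
  intro S
  induction S using Finset.induction_on with
  | empty => exact ⟨F, Relation.ReflTransGen.refl, by simp⟩
  | @insert a S ha ih =>
    obtain ⟨F₁, h1, h2⟩ := ih
    obtain ⟨F₂, h3, h4⟩ := exists_cst B a.1 a.2 F₁
    refine ⟨F₂, h1.trans h3, ?_⟩
    intro p hp
    rcases Finset.mem_insert.1 hp with rfl | hp
    · exact h4
    · exact cst_rtg h3 (h2 p hp)

end Aux

/-- if `B` is not `Σ`-good, there is a series of standard blow-ups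
`Σ̃ ⇝ Σ` such that `B` is `Σ̃`-good. -/
theorem stmt7 (d n : ℕ) (F : Finset (Finset (Fin d → ℤ)))
    (hns : ∀ σ ∈ F, IsNsCone d σ) (hgen : IsGenerable F)
    (B : Matrix (Fin d) (Fin n) ℤ) (hbad : ¬ GoodFan B F) :
    ∃ F' : Finset (Finset (Fin d → ℤ)),
      Relation.ReflTransGen IsStdBlowUp F F' ∧ GoodFan B F' := by
  obtain ⟨F', h1, h2⟩ := exists_cst_all B F
  refine ⟨F', h1, ?_⟩
  intro σ hσ
  refine ⟨Tuple.sort (fun i => ∑ ε ∈ σ, bEdge B ε i), ?_⟩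
  intro ε hε a b hab
  set γ := Tuple.sort (fun i => ∑ ε ∈ σ, bEdge B ε i) with hγ
  have hmono : (∑ ε'' ∈ σ, bEdge B ε'' (γ a)) ≤ ∑ ε'' ∈ σ, bEdge B ε'' (γ b) :=
    Tuple.monotone_sort (fun i => ∑ ε ∈ σ, bEdge B ε i) hab
  by_cases hc : ∀ ε' ∈ σ, bEdge B ε' (γ a) ≤ bEdge B ε' (γ b)
  · exact hc ε hε
  · push_neg at hc
    obtain ⟨ε', hε', hlt⟩ := hc
    have hall : ∀ ε'' ∈ σ, bEdge B ε'' (γ b) ≤ bEdge B ε'' (γ a) := by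
      intro ε'' hε''
      by_contra hcon
      push_neg at hcon
      exact h2 (γ a) (γ b) σ hσ ε' hε' ε'' hε''
        (by simp only [dlt]; linarith) (by simp only [dlt]; linarith)
    have hsum2 : (∑ ε'' ∈ σ, bEdge B ε'' (γ b)) ≤ ∑ ε'' ∈ σ, bEdge B ε'' (γ a) :=
      Finset.sum_le_sum hall
    have heq : (∑ ε'' ∈ σ, bEdge B ε'' (γ b)) = ∑ ε'' ∈ σ, bEdge B ε'' (γ a) :=
      le_antisymm hsum2 hmono
    have hterm := (Finset.sum_eq_sum_iff_of_le hall).1 heq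
    exact le_of_eq (hterm ε hε).symm
end
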